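/- arXiv:1701.08514 — 8 statements merged into one kernel-verified Lean document; each statement's English description precedes it below -/
import Mathlib

section
/- (Domination by optimal strategies.) For every pair (p,q) ∈ P × Q there exist a minimal strategy p̄ ∈ P and a maximal strategy q̄ ∈ Q such that V_I(p̄) ⊆ V_I(p) and V_II(q̄) ⊆ V_II(q). -/
open Set

noncomputable section

/-- The mixed-strategy simplex in `ℝ^m`. -/
def simplex (m : ℕ) : Set (Fin m → ℝ) := {p | (∀ i, 0 ≤ p i) ∧ ∑ i, p i = 1}

/-- Expected vector payoff `v(p,q) = Σ_i Σ_j p_i g_{ij} q_j`. -/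
def payoff {K m n : ℕ} (g : Fin m → Fin n → (Fin K → ℝ)) (p : Fin m → ℝ) (q : Fin n → ℝ) :
    Fin K → ℝ := ∑ i, ∑ j, (p i * q j) • g i j

/-- `v_I(p) = {v(p,q) : q ∈ Q}`. -/
def vI {K m n : ℕ} (g : Fin m → Fin n → (Fin K → ℝ)) (p : Fin m → ℝ) : Set (Fin K → ℝ) :=
  {y | ∃ q ∈ simplex n, y = payoff g p q}

/-- `V_I(p) = v_I(p) - ℝ^K_+`. -/
def VI {K m n : ℕ} (g : Fin m → Fin n → (Fin K → ℝ)) (p : Fin m → ℝ) : Set (Fin K → ℝ) :=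
  {y | ∃ z ∈ vI g p, y ≤ z}

/-- `v_II(q) = {v(p,q) : p ∈ P}`. -/
def vII {K m n : ℕ} (g : Fin m → Fin n → (Fin K → ℝ)) (q : Fin n → ℝ) : Set (Fin K → ℝ) :=
  {y | ∃ p ∈ simplex m, y = payoff g p q}

/-- `V_II(q) = v_II(q) + ℝ^K_+`. -/
def VII {K m n : ℕ} (g : Fin m → Fin n → (Fin K → ℝ)) (q : Fin n → ℝ) : Set (Fin K → ℝ) :=
  {y | ∃ z ∈ vII g q, z ≤ y}

/-- Maximal points of a set w.r.t. the componentwise order. -/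
def maxSet {K : ℕ} (A : Set (Fin K → ℝ)) : Set (Fin K → ℝ) :=
  {z ∈ A | ∀ y ∈ A, z ≤ y → y = z}

/-- Minimal points of a set w.r.t. the componentwise order. -/
def minSet {K : ℕ} (A : Set (Fin K → ℝ)) : Set (Fin K → ℝ) :=
  {z ∈ A | ∀ y ∈ A, y ≤ z → y = z}

/-- `p̄` is a minimal strategy for player I: no `p ∈ P` with `V_I(p) ⊆ V_I(p̄)`
and `V_I(p) ≠ V_I(p̄)`. -/
def MinimalStrat {K m n : ℕ} (g : Fin m → Fin n → (Fin K → ℝ)) (pbar : Fin m → ℝ) : Prop :=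
  ∀ p ∈ simplex m, VI g p ⊆ VI g pbar → VI g p = VI g pbar

/-- `q̄` is a maximal strategy for player II: no `q ∈ Q` with `V_II(q) ⊆ V_II(q̄)`
and `V_II(q) ≠ V_II(q̄)`. -/
def MaximalStrat {K m n : ℕ} (g : Fin m → Fin n → (Fin K → ℝ)) (qbar : Fin n → ℝ) : Prop :=
  ∀ q ∈ simplex n, VII g q ⊆ VII g qbar → VII g q = VII g qbar

/-! The inclusion `V_I(p') ⊆ V_I(p)` is a closed condition on `p'`: `V_I(p)` is a closed lower
set, so it amounts to `v(p', q) ∈ V_I(p)` for every `q ∈ Q`. The strategies dominating a given one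
thus form closed subsets of the compact simplex, and Zorn's lemma, with Cantor's intersection
theorem bounding chains from below, gives a minimal strategy below `p`. Player II's problem is
player I's problem for the game `-Gᵀ`, since `V_II(q)` is the reflection of `V_I(q)` for `-Gᵀ`. -/

theorem IsCompact.exists_minimal_subset {X β : Type*} [TopologicalSpace X] {s : Set X}
    (hs : IsCompact s) (V : X → Set β) (hV : ∀ x, IsClosed {y | V y ⊆ V x}) {x : X}
    (hx : x ∈ s) : ∃ y ∈ s, V y ⊆ V x ∧ ∀ z ∈ s, V z ⊆ V y → V z = V y := by
  obtain ⟨_, hsub, ⟨y, hy, rfl⟩, hmin⟩ := zorn_superset_nonempty (V '' s) (fun c hcS hc hne => by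
    have : Nonempty c := hne.to_subtype
    let F : c → Set X := fun t => {y | V y ⊆ t}
    have hF : ∀ t : c, IsClosed (F t) := fun ⟨t, ht⟩ => by
      obtain ⟨y, -, rfl⟩ := hcS ht
      exact hV y
    have hdir : Directed (· ⊇ ·) F := fun a b => (hc.total a.2 b.2).elim
      (fun h => ⟨a, subset_rfl, fun _ hy => hy.trans h⟩)
      (fun h => ⟨b, fun _ hy => hy.trans h, subset_rfl⟩)
    obtain ⟨y, hys, hy⟩ : (s ∩ ⋂ t, F t).Nonempty := by
      by_contra h
      obtain ⟨⟨t, ht⟩, hst⟩ :=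
        hs.elim_directed_family_closed F hF (not_nonempty_iff_eq_empty.1 h) hdir
      obtain ⟨y, hys, rfl⟩ := hcS ht
      exact hst.subset ⟨hys, fun _ h => h⟩
    exact ⟨V y, mem_image_of_mem V hys, fun t ht => mem_iInter.1 hy ⟨t, ht⟩⟩)
    (V x) (mem_image_of_mem V hx)
  exact ⟨y, hy, hsub, fun z hz hzy => (hmin (mem_image_of_mem V hz) hzy).antisymm' hzy⟩

section VectorGame

variable {K m n : ℕ}

theorem continuous_payoff_left (g : Fin m → Fin n → (Fin K → ℝ)) (q : Fin n → ℝ) :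
    Continuous fun p => payoff g p q := by
  unfold payoff; fun_prop

theorem continuous_payoff_right (g : Fin m → Fin n → (Fin K → ℝ)) (p : Fin m → ℝ) :
    Continuous (payoff g p) := by
  unfold payoff; fun_prop

theorem VI_eq_lowerClosure (g : Fin m → Fin n → (Fin K → ℝ)) (p : Fin m → ℝ) :
    VI g p = lowerClosure (payoff g p '' simplex n) := by
  ext y; simp [VI, vI, eq_comm]

theorem isClosed_VI (g : Fin m → Fin n → (Fin K → ℝ)) (p : Fin m → ℝ) : IsClosed (VI g p) := by
  have hc : IsCompact (payoff g p '' simplex n) :=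
    (isCompact_stdSimplex ℝ (Fin n)).image (continuous_payoff_right g p)
  rw [VI_eq_lowerClosure]
  exact hc.isClosed.lowerClosure_pi hc.isBounded.bddAbove

theorem VI_subset_VI_iff {g : Fin m → Fin n → (Fin K → ℝ)} {p' p : Fin m → ℝ} :
    VI g p' ⊆ VI g p ↔ ∀ q ∈ simplex n, payoff g p' q ∈ VI g p := by
  rw [VI_eq_lowerClosure, VI_eq_lowerClosure, LowerSet.coe_subset_coe, lowerClosure_le,
    image_subset_iff]
  rfl

theorem isClosed_setOf_VI_subset (g : Fin m → Fin n → (Fin K → ℝ)) (p : Fin m → ℝ) :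
    IsClosed {p' | VI g p' ⊆ VI g p} := by
  simp only [VI_subset_VI_iff, ofPred_forall]
  exact isClosed_biInter fun q _ => (isClosed_VI g p).preimage (continuous_payoff_left g q)

def negTranspose (g : Fin m → Fin n → (Fin K → ℝ)) : Fin n → Fin m → (Fin K → ℝ) :=
  fun j i => -g i j

theorem payoff_negTranspose (g : Fin m → Fin n → (Fin K → ℝ)) (p : Fin m → ℝ)
    (q : Fin n → ℝ) : payoff (negTranspose g) q p = -payoff g p q := by
  simp only [payoff, negTranspose, smul_neg, Finset.sum_neg_distrib, mul_comm (q _)]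
  rw [Finset.sum_comm]

theorem VII_eq_neg_VI (g : Fin m → Fin n → (Fin K → ℝ)) (q : Fin n → ℝ) :
    VII g q = -VI (negTranspose g) q := by
  ext y
  simp [VII, vII, VI, vI, payoff_negTranspose, le_neg]

theorem isClosed_setOf_VII_subset (g : Fin m → Fin n → (Fin K → ℝ)) (q : Fin n → ℝ) :
    IsClosed {q' | VII g q' ⊆ VII g q} := by
  simpa only [VII_eq_neg_VI, Set.neg_subset_neg] using isClosed_setOf_VI_subset (negTranspose g) q

end VectorGame

theorem stmt3_general {K m n : ℕ}
    (g : Fin m → Fin n → (Fin K → ℝ)) (p : Fin m → ℝ) (q : Fin n → ℝ)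
    (hp : p ∈ simplex m) (hq : q ∈ simplex n) :
    ∃ pbar ∈ simplex m, ∃ qbar ∈ simplex n,
      MinimalStrat g pbar ∧ MaximalStrat g qbar ∧
      VI g pbar ⊆ VI g p ∧ VII g qbar ⊆ VII g q := by
  obtain ⟨pbar, hpbar, hsubP, hminP⟩ := (isCompact_stdSimplex ℝ (Fin m)).exists_minimal_subset
    (VI g) (isClosed_setOf_VI_subset g) hp
  obtain ⟨qbar, hqbar, hsubQ, hmaxQ⟩ := (isCompact_stdSimplex ℝ (Fin n)).exists_minimal_subset
    (VII g) (isClosed_setOf_VII_subset g) hq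
  exact ⟨pbar, hpbar, qbar, hqbar, hminP, hmaxQ, hsubP, hsubQ⟩

theorem stmt3 {K m n : ℕ} (hK : 0 < K) (hm : 0 < m) (hn : 0 < n)
    (g : Fin m → Fin n → (Fin K → ℝ)) (p : Fin m → ℝ) (q : Fin n → ℝ)
    (hp : p ∈ simplex m) (hq : q ∈ simplex n) :
    ∃ pbar ∈ simplex m, ∃ qbar ∈ simplex n,
      MinimalStrat g pbar ∧ MaximalStrat g qbar ∧
      VI g pbar ⊆ VI g p ∧ VII g qbar ⊆ VII g q :=
  stmt3_general g p q hp hq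
end
end

section
/- Let A ⊆ ℝ^K be a nonempty closed convex set satisfying A = A + ℝ^K_+, and let B ⊆ ℝ^K be any set. Then B ⊆ A if and only if inf_{x∈A} βᵀx ≤ inf_{x∈B} βᵀx for every β ∈ ℝ^K_+, where the infima are taken in the extended reals. -/
open Set

noncomputable section

theorem stmt8 {K : ℕ} (A : Set (Fin K → ℝ)) (B : Set (Fin K → ℝ))
    (hAne : A.Nonempty) (hAcl : IsClosed A) (hAco : Convex ℝ A)
    (hAu : ∀ y z : Fin K → ℝ, y ≤ z → y ∈ A → z ∈ A) :
    B ⊆ A ↔ ∀ β : Fin K → ℝ, (∀ k, 0 ≤ β k) →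
      (⨅ x ∈ A, ((∑ k, β k * x k : ℝ) : EReal)) ≤
        ⨅ x ∈ B, ((∑ k, β k * x k : ℝ) : EReal) := by
  constructor
  · intro hBA β _
    exact le_iInf₂ fun x hx => iInf₂_le x (hBA hx)
  · intro h b hb
    by_contra hbA
    obtain ⟨f, u, hfA, hfb⟩ := geometric_hahn_banach_closed_point hAco hAcl hbA
    set β : Fin K → ℝ := fun k => -(f (Pi.single k (1:ℝ))) with hβdef
    have hflin : ∀ x : Fin K → ℝ, (∑ k, β k * x k) = -(f x) := by
      intro x
      have hx : (x : Fin K → ℝ) = ∑ k, x k • (Pi.single k 1 : Fin K → ℝ) := by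
        ext j
        simp [Pi.single_apply]
      conv_rhs => rw [hx]
      rw [map_sum, ← Finset.sum_neg_distrib]
      refine Finset.sum_congr rfl fun k _ => ?_
      rw [map_smul, smul_eq_mul, hβdef]
      ring
    -- β is nonnegative
    have hβpos : ∀ k, 0 ≤ β k := by
      intro k
      by_contra hneg
      push_neg at hneg
      have hfe : 0 < f (Pi.single k (1:ℝ)) := by
        simpa [hβdef] using hneg
      obtain ⟨a, ha⟩ := hAne
      have ht : ∀ t : ℝ, 0 ≤ t → f a + t * f (Pi.single k (1:ℝ)) < u := by
        intro t htpos
        have hle : a ≤ a + t • (Pi.single k 1 : Fin K → ℝ) := by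
          intro j
          simp only [Pi.add_apply, Pi.smul_apply, smul_eq_mul]
          have h0 : 0 ≤ t * (Pi.single k 1 : Fin K → ℝ) j := by
            apply mul_nonneg htpos
            by_cases hj : j = k <;> simp [Pi.single_apply, hj]
          linarith
        have hmem := hAu a _ hle ha
        have hv := hfA _ hmem
        rwa [map_add, map_smul, smul_eq_mul] at hv
      have hfa : f a < u := hfA a ha
      have h2 := ht ((u - f a) / f (Pi.single k (1:ℝ)))
        (le_of_lt (div_pos (by linarith) hfe))
      rw [div_mul_cancel₀ _ (ne_of_gt hfe)] at h2
      linarith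
    -- lower bound on inf over A
    have hA_lb : ((-u : ℝ) : EReal) ≤ ⨅ x ∈ A, ((∑ k, β k * x k : ℝ) : EReal) := by
      apply le_iInf₂
      intro x hx
      have := hfA x hx
      rw [EReal.coe_le_coe_iff, hflin x]
      linarith
    have hB_ub : (⨅ x ∈ B, ((∑ k, β k * x k : ℝ) : EReal)) ≤ ((∑ k, β k * b k : ℝ) : EReal) :=
      iInf₂_le b hb
    have hchain := le_trans hA_lb (le_trans (h β hβpos) hB_ub)
    rw [EReal.coe_le_coe_iff, hflin b] at hchain
    linarith
end
end

section
/- (Optimal strategies improve on Pareto optimal security strategies.) For every minimal strategy p ∈ P one has V_I(p) ∩ (𝒲_I + (ℝ^K_+ \ {0})) = ∅, and for every maximal strategy q ∈ Q one has V_II(q) ∩ (𝒲_II − (ℝ^K_+ \ {0})) = ∅. -/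
open Set Pointwise

noncomputable section

/-- POSS value set for player I:
`𝒲_I = ∪_{p∈P} ∩_{j} [Σ_i p_i g_{ij} + ℝ^K_+]`. -/
def scrWI {K m n : ℕ} (g : Fin m → Fin n → (Fin K → ℝ)) : Set (Fin K → ℝ) :=
  ⋃ p ∈ simplex m, ⋂ j : Fin n, {y | (∑ i, p i • g i j) ≤ y}

/-- POSS value set for player II:
`𝒲_II = ∪_{q∈Q} ∩_{i} [Σ_j q_j g_{ij} - ℝ^K_+]`. -/
def scrWII {K m n : ℕ} (g : Fin m → Fin n → (Fin K → ℝ)) : Set (Fin K → ℝ) :=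
  ⋃ q ∈ simplex n, ⋂ i : Fin m, {y | y ≤ ∑ j, q j • g i j}


lemma sum_convex_le {n : ℕ} {q : Fin n → ℝ} (hq : q ∈ simplex n)
    {a : Fin n → ℝ} {w : ℝ} (h : ∀ j, a j ≤ w) :
    ∑ j, q j * a j ≤ w := by
  calc ∑ j, q j * a j ≤ ∑ j, q j * w :=
        Finset.sum_le_sum (fun j _ => mul_le_mul_of_nonneg_left (h j) (hq.1 j))
    _ = w := by rw [← Finset.sum_mul, hq.2, one_mul]

lemma sum_convex_ge {n : ℕ} {q : Fin n → ℝ} (hq : q ∈ simplex n)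
    {a : Fin n → ℝ} {w : ℝ} (h : ∀ j, w ≤ a j) :
    w ≤ ∑ j, q j * a j := by
  calc (w : ℝ) = ∑ j, q j * w := by rw [← Finset.sum_mul, hq.2, one_mul]
    _ ≤ ∑ j, q j * a j :=
        Finset.sum_le_sum (fun j _ => mul_le_mul_of_nonneg_left (h j) (hq.1 j))

lemma payoff_apply_j {K m n : ℕ} (g : Fin m → Fin n → (Fin K → ℝ))
    (p : Fin m → ℝ) (q : Fin n → ℝ) (k : Fin K) :
    payoff g p q k = ∑ j, q j * (∑ i, p i * g i j k) := by
  simp only [payoff, Finset.sum_apply, Pi.smul_apply, smul_eq_mul]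
  rw [Finset.sum_comm]
  refine Finset.sum_congr rfl (fun j _ => ?_)
  rw [Finset.mul_sum]
  exact Finset.sum_congr rfl (fun i _ => by ring)

lemma payoff_apply_i {K m n : ℕ} (g : Fin m → Fin n → (Fin K → ℝ))
    (p : Fin m → ℝ) (q : Fin n → ℝ) (k : Fin K) :
    payoff g p q k = ∑ i, p i * (∑ j, q j * g i j k) := by
  simp only [payoff, Finset.sum_apply, Pi.smul_apply, smul_eq_mul]
  refine Finset.sum_congr rfl (fun i _ => ?_)
  rw [Finset.mul_sum]
  exact Finset.sum_congr rfl (fun j _ => by ring)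

theorem stmt9 {K m n : ℕ} (hK : 0 < K) (hm : 0 < m) (hn : 0 < n)
    (g : Fin m → Fin n → (Fin K → ℝ)) :
    (∀ p ∈ simplex m, MinimalStrat g p →
      VI g p ∩ (scrWI g + {c : Fin K → ℝ | 0 ≤ c ∧ c ≠ 0}) = ∅) ∧
    (∀ q ∈ simplex n, MaximalStrat g q →
      VII g q ∩ (scrWII g - {c : Fin K → ℝ | 0 ≤ c ∧ c ≠ 0}) = ∅) := by
  constructor
  · intro pbar hpbar hmin
    ext x
    simp only [Set.mem_inter_iff, Set.mem_empty_iff_false, iff_false]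
    rintro ⟨hx1, hx2⟩
    rw [Set.mem_add] at hx2
    obtain ⟨w, hw, c, hc, hwc⟩ := hx2
    rw [scrWI, Set.mem_iUnion₂] at hw
    obtain ⟨p, hpP, hw2⟩ := hw
    rw [Set.mem_iInter] at hw2
    have key : ∀ q ∈ simplex n, payoff g p q ≤ w := by
      intro q hq k
      rw [payoff_apply_j]
      refine sum_convex_le hq (fun j => ?_)
      have := hw2 j k
      simpa [Finset.sum_apply, Pi.smul_apply, smul_eq_mul] using this
    obtain ⟨z, hz, hxz⟩ := hx1
    obtain ⟨qhat, hqhat, rfl⟩ := hz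
    have hwv : w ≤ payoff g pbar qhat := by
      calc w ≤ w + c := le_add_of_nonneg_right hc.1
        _ = x := hwc
        _ ≤ _ := hxz
    have hsub : VI g p ⊆ VI g pbar := by
      rintro y ⟨z, ⟨q, hq, rfl⟩, hyz⟩
      exact ⟨payoff g pbar qhat, ⟨qhat, hqhat, rfl⟩,
        le_trans (le_trans hyz (key q hq)) hwv⟩
    have heq := hmin p hpP hsub
    have hx1' : x ∈ VI g p := by
      rw [heq]
      exact ⟨payoff g pbar qhat, ⟨qhat, hqhat, rfl⟩, hxz⟩
    obtain ⟨z, ⟨q', hq', rfl⟩, hxz'⟩ := hx1'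
    have hxw : x ≤ w := le_trans hxz' (key q' hq')
    have hc0 : c ≤ 0 := by
      have : w + c ≤ w := hwc ▸ hxw
      exact (add_le_iff_nonpos_right _).mp this
    exact hc.2 (le_antisymm hc0 hc.1)
  · intro qbar hqbar hmax
    ext x
    simp only [Set.mem_inter_iff, Set.mem_empty_iff_false, iff_false]
    rintro ⟨hx1, hx2⟩
    rw [Set.mem_sub] at hx2
    obtain ⟨w, hw, c, hc, hwc⟩ := hx2
    rw [scrWII, Set.mem_iUnion₂] at hw
    obtain ⟨q, hqQ, hw2⟩ := hw
    rw [Set.mem_iInter] at hw2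
    have key : ∀ p ∈ simplex m, w ≤ payoff g p q := by
      intro p hp k
      rw [payoff_apply_i]
      refine sum_convex_ge hp (fun i => ?_)
      have := hw2 i k
      simpa [Finset.sum_apply, Pi.smul_apply, smul_eq_mul] using this
    obtain ⟨z, hz, hxz⟩ := hx1
    obtain ⟨phat, hphat, rfl⟩ := hz
    have hwv : payoff g phat qbar ≤ w := by
      calc payoff g phat qbar ≤ x := hxz
        _ = w - c := hwc.symm
        _ ≤ w := sub_le_self w hc.1
    have hsub : VII g q ⊆ VII g qbar := by
      rintro y ⟨z, ⟨p, hp, rfl⟩, hyz⟩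
      exact ⟨payoff g phat qbar, ⟨phat, hphat, rfl⟩,
        le_trans hwv (le_trans (key p hp) hyz)⟩
    have heq := hmax q hqQ hsub
    have hx1' : x ∈ VII g q := by
      rw [heq]
      exact ⟨payoff g phat qbar, ⟨phat, hphat, rfl⟩, hxz⟩
    obtain ⟨z, ⟨p', hp', rfl⟩, hxz'⟩ := hx1'
    have hxw : w ≤ x := le_trans (key p' hp') hxz'
    have hc0 : c ≤ 0 := by
      have : w ≤ w - c := hwc ▸ hxw
      simpa using this
    exact hc.2 (le_antisymm hc0 hc.1)
end
end

section
/- (LP optimality test.) Let p̄ ∈ P. Suppose H is a real s×K matrix and h ∈ ℝ^s with V_I(p̄) = {y ∈ ℝ^K : Hy ≥ h componentwise}; suppose y¹,…,y^r ∈ ℝ^K satisfy V_I(p̄) = co{y¹,…,y^r} − ℝ^K_+; and suppose for each ℓ = 1,…,r there are c^ℓ ∈ ℝ^K and γ_ℓ ∈ ℝ with (c^ℓ)ᵀy ≥ γ_ℓ for all y ∈ V_I(p̄) and V_I(p̄) ∩ {y : (c^ℓ)ᵀy = γ_ℓ} = {y^ℓ}. Then p̄ is a minimal strategy if and only if the optimal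 value of the linear program: maximize Σ_{ℓ=1}^r ε_ℓ over (p,ε) ∈ P × ℝ^r subject to H·(Σ_{i=1}^m p_i g_{ij}) ≥ h for all j = 1,…,n and (c^ℓ)ᵀ(Σ_{i=1}^m p_i g_{ij}) ≥ γ_ℓ + ε_ℓ for all ℓ = 1,…,r and all j = 1,…,n, equals zero. -/
open Set

noncomputable section

section Aux

variable {K m n : ℕ}

lemma payoff_eq (g : Fin m → Fin n → (Fin K → ℝ)) (p : Fin m → ℝ) (q : Fin n → ℝ) :
    payoff g p q = ∑ j, q j • (∑ i, p i • g i j) := by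
  funext k
  simp only [payoff, Finset.sum_apply, Pi.smul_apply, smul_eq_mul, Finset.mul_sum]
  rw [Finset.sum_comm]
  exact Finset.sum_congr rfl fun j _ => Finset.sum_congr rfl fun i _ => by ring

lemma down_mem {g : Fin m → Fin n → (Fin K → ℝ)} {p : Fin m → ℝ} {z' z : Fin K → ℝ}
    (hz : z ∈ VI g p) (hle : z' ≤ z) : z' ∈ VI g p := by
  obtain ⟨w, hw, hzw⟩ := hz
  exact ⟨w, hw, hle.trans hzw⟩

lemma single_mem_simplex (j : Fin n) : Pi.single j (1:ℝ) ∈ simplex n := by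
  constructor
  · intro i
    rcases eq_or_ne i j with rfl | hij
    · simp
    · simp [Pi.single_eq_of_ne hij]
  · simp [Finset.sum_pi_single']

lemma col_mem_vI (g : Fin m → Fin n → (Fin K → ℝ)) (p : Fin m → ℝ) (j : Fin n) :
    (∑ i, p i • g i j) ∈ vI g p := by
  refine ⟨Pi.single j 1, single_mem_simplex j, ?_⟩
  rw [payoff_eq]
  rw [Finset.sum_eq_single j (fun b _ hb => by simp [Pi.single_eq_of_ne hb])
    (fun hj => absurd (Finset.mem_univ j) hj)]
  simp

lemma payoff_smul_add (g : Fin m → Fin n → (Fin K → ℝ)) (p : Fin m → ℝ) (a b : ℝ)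
    (q1 q2 : Fin n → ℝ) :
    payoff g p (a • q1 + b • q2) = a • payoff g p q1 + b • payoff g p q2 := by
  funext k
  simp only [payoff, Finset.sum_apply, Pi.add_apply, Pi.smul_apply, smul_eq_mul,
    Finset.mul_sum, ← Finset.sum_add_distrib]
  exact Finset.sum_congr rfl fun i _ => Finset.sum_congr rfl fun j _ => by ring

lemma convex_VI (g : Fin m → Fin n → (Fin K → ℝ)) (p : Fin m → ℝ) : Convex ℝ (VI g p) := by
  intro x hx y hy a b ha hb hab
  obtain ⟨zx, ⟨qx, hqx, rfl⟩, hxz⟩ := hx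
  obtain ⟨zy, ⟨qy, hqy, rfl⟩, hyz⟩ := hy
  refine ⟨payoff g p (a • qx + b • qy), ⟨a • qx + b • qy, ?_, rfl⟩, ?_⟩
  · exact convex_stdSimplex ℝ (Fin n) hqx hqy ha hb hab
  · rw [payoff_smul_add]
    exact add_le_add (smul_le_smul_of_nonneg_left hxz ha) (smul_le_smul_of_nonneg_left hyz hb)

lemma dot_le_of_le {c z w : Fin K → ℝ} (hc : ∀ k, c k ≤ 0) (hzw : z ≤ w) :
    ∑ k, c k * w k ≤ ∑ k, c k * z k :=
  Finset.sum_le_sum fun k _ => mul_le_mul_of_nonpos_left (hzw k) (hc k)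

lemma dot_comb (c : Fin K → ℝ) (q : Fin n → ℝ) (w : Fin n → Fin K → ℝ) :
    (∑ k, c k * (∑ j, q j • w j) k) = ∑ j, q j * ∑ k, c k * w j k := by
  simp only [Finset.sum_apply, Pi.smul_apply, smul_eq_mul, Finset.mul_sum]
  rw [Finset.sum_comm]
  exact Finset.sum_congr rfl fun j _ => Finset.sum_congr rfl fun k _ => by ring

end Aux

theorem stmt13 {K m n s r : ℕ} (hK : 0 < K) (hm : 0 < m) (hn : 0 < n)
    (g : Fin m → Fin n → (Fin K → ℝ)) (pbar : Fin m → ℝ) (hpbar : pbar ∈ simplex m)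
    (H : Matrix (Fin s) (Fin K) ℝ) (h : Fin s → ℝ)
    (hrep : VI g pbar = {y : Fin K → ℝ | ∀ u, h u ≤ H.mulVec y u})
    (y : Fin r → (Fin K → ℝ))
    (hvert : VI g pbar = {z : Fin K → ℝ | ∃ w ∈ convexHull ℝ (Set.range y), z ≤ w})
    (c : Fin r → (Fin K → ℝ)) (γ : Fin r → ℝ)
    (hsupp : ∀ ℓ : Fin r, (∀ z ∈ VI g pbar, γ ℓ ≤ ∑ k, c ℓ k * z k) ∧
      {z ∈ VI g pbar | ∑ k, c ℓ k * z k = γ ℓ} = {y ℓ}) :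
    MinimalStrat g pbar ↔
      IsGreatest {t : ℝ | ∃ (p : Fin m → ℝ) (ε : Fin r → ℝ),
        p ∈ simplex m ∧
        (∀ j : Fin n, ∀ u, h u ≤ H.mulVec (∑ i, p i • g i j) u) ∧
        (∀ ℓ : Fin r, ∀ j : Fin n, γ ℓ + ε ℓ ≤ ∑ k, c ℓ k * (∑ i, p i • g i j) k) ∧
        t = ∑ ℓ, ε ℓ} 0 := by
  haveI hne : Nonempty (Fin n) := ⟨⟨0, hn⟩⟩
  have hrep' : ∀ z : Fin K → ℝ, z ∈ VI g pbar ↔ ∀ u, h u ≤ H.mulVec z u :=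
    fun z => Set.ext_iff.mp hrep z
  have hcolmem : ∀ (p : Fin m → ℝ) (j : Fin n), (∑ i, p i • g i j) ∈ VI g p :=
    fun p j => ⟨_, col_mem_vI g p j, le_refl _⟩
  have hsubset_of : ∀ p : Fin m → ℝ, (∀ j, (∑ i, p i • g i j) ∈ VI g pbar) →
      VI g p ⊆ VI g pbar := by
    intro p hcols x hx
    obtain ⟨z, ⟨q, hq, rfl⟩, hle⟩ := hx
    have hz : payoff g p q ∈ VI g pbar := by
      rw [payoff_eq]
      exact (convex_VI g pbar).sum_mem (fun j _ => hq.1 j) hq.2 (fun j _ => hcols j)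
    exact down_mem hz hle
  have hyface : ∀ ℓ, y ℓ ∈ VI g pbar ∧ ∑ k, c ℓ k * y ℓ k = γ ℓ := by
    intro ℓ
    have h2 : y ℓ ∈ {z ∈ VI g pbar | ∑ k, c ℓ k * z k = γ ℓ} := by
      rw [(hsupp ℓ).2]; exact rfl
    exact h2
  have hcnp : ∀ ℓ k, c ℓ k ≤ 0 := by
    intro ℓ k
    by_contra hpos
    push_neg at hpos
    set z0 : Fin K → ℝ := ∑ i, pbar i • g i ⟨0, hn⟩ with hz0def
    have hz0 : z0 ∈ VI g pbar := hcolmem pbar ⟨0, hn⟩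
    set D := ∑ k', c ℓ k' * z0 k' with hD
    have hDγ : γ ℓ ≤ D := (hsupp ℓ).1 z0 hz0
    set t := (D - γ ℓ + 1) / c ℓ k with ht
    have ht0 : 0 ≤ t := div_nonneg (by linarith) hpos.le
    have hmem : z0 - t • (Pi.single k 1 : Fin K → ℝ) ∈ VI g pbar := by
      refine down_mem hz0 ?_
      intro k'
      have h1 : 0 ≤ t * (Pi.single k 1 : Fin K → ℝ) k' := by
        rcases eq_or_ne k' k with rfl | hkk
        · simpa using ht0
        · simp [Pi.single_eq_of_ne hkk]
      simp only [Pi.sub_apply, Pi.smul_apply, smul_eq_mul]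
      linarith
    have hlow := (hsupp ℓ).1 _ hmem
    have hcalc : ∑ k', c ℓ k' * (z0 - t • (Pi.single k 1 : Fin K → ℝ)) k' = D - t * c ℓ k := by
      simp only [Pi.sub_apply, Pi.smul_apply, smul_eq_mul, mul_sub, Finset.sum_sub_distrib]
      rw [hD]
      congr 1
      rw [Finset.sum_eq_single k (fun b _ hb => by simp [Pi.single_eq_of_ne hb])
        (fun hj => absurd (Finset.mem_univ k) hj)]
      simp [mul_comm]
    have htc : t * c ℓ k = D - γ ℓ + 1 := div_mul_cancel₀ _ hpos.ne'
    rw [hcalc, htc] at hlow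
    linarith
  constructor
  · intro hmin
    constructor
    · refine ⟨pbar, 0, hpbar, ?_, ?_, by simp⟩
      · intro j u
        exact (hrep' _).mp (hcolmem pbar j) u
      · intro ℓ j
        simpa using (hsupp ℓ).1 _ (hcolmem pbar j)
    · rintro t ⟨p, ε, hp, hH, hc, rfl⟩
      have hsub : VI g p ⊆ VI g pbar := hsubset_of p (fun j => (hrep' _).mpr (hH j))
      have heq : VI g p = VI g pbar := hmin p hp hsub
      have hε : ∀ ℓ, ε ℓ ≤ 0 := by
        intro ℓ
        have hy : y ℓ ∈ VI g p := heq ▸ (hyface ℓ).1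
        obtain ⟨z, ⟨q, hq, rfl⟩, hle⟩ := hy
        have h1 : ∑ k, c ℓ k * payoff g p q k ≤ γ ℓ :=
          le_of_le_of_eq (dot_le_of_le (hcnp ℓ) hle) (hyface ℓ).2
        have h2 : γ ℓ + ε ℓ ≤ ∑ k, c ℓ k * payoff g p q k := by
          rw [payoff_eq, dot_comb]
          calc γ ℓ + ε ℓ = ∑ j, q j * (γ ℓ + ε ℓ) := by rw [← Finset.sum_mul, hq.2, one_mul]
          _ ≤ ∑ j, q j * ∑ k, c ℓ k * (∑ i, p i • g i j) k :=
            Finset.sum_le_sum fun j _ => mul_le_mul_of_nonneg_left (hc ℓ j) (hq.1 j)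
        linarith
      exact Finset.sum_nonpos (fun ℓ _ => hε ℓ)
  · rintro ⟨_, hub⟩ p hp hsub
    have hcols : ∀ j, (∑ i, p i • g i j) ∈ VI g pbar := fun j => hsub (hcolmem p j)
    set ε : Fin r → ℝ := fun ℓ =>
      Finset.univ.inf' Finset.univ_nonempty
        (fun j => (∑ k, c ℓ k * (∑ i, p i • g i j) k) - γ ℓ) with hεdef
    have hεnn : ∀ ℓ, 0 ≤ ε ℓ := by
      intro ℓ
      refine Finset.le_inf' _ _ (fun j _ => ?_)
      have := (hsupp ℓ).1 _ (hcols j)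
      linarith
    have hsum0 : ∑ ℓ, ε ℓ ≤ 0 := by
      refine hub ⟨p, ε, hp, fun j u => (hrep' _).mp (hcols j) u, fun ℓ j => ?_, rfl⟩
      have := Finset.inf'_le (fun j => (∑ k, c ℓ k * (∑ i, p i • g i j) k) - γ ℓ)
        (Finset.mem_univ j)
      rw [hεdef]
      linarith
    have hε0 : ∀ ℓ, ε ℓ = 0 := by
      intro ℓ
      have h1 : ∑ ℓ, ε ℓ = 0 :=
        le_antisymm hsum0 (Finset.sum_nonneg fun ℓ _ => hεnn ℓ)
      exact (Finset.sum_eq_zero_iff_of_nonneg (fun ℓ _ => hεnn ℓ)).mp h1 ℓ (Finset.mem_univ ℓ)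
    have hyinp : ∀ ℓ, y ℓ ∈ VI g p := by
      intro ℓ
      obtain ⟨j, _, hj⟩ := Finset.exists_mem_eq_inf' (Finset.univ_nonempty (α := Fin n))
        (fun j => (∑ k, c ℓ k * (∑ i, p i • g i j) k) - γ ℓ)
      have hzero : (∑ k, c ℓ k * (∑ i, p i • g i j) k) = γ ℓ := by
        have := hε0 ℓ
        rw [hεdef] at this
        simp only at this
        rw [this] at hj
        linarith [hj.symm]
      have hmemface : (∑ i, p i • g i j) ∈ ({y ℓ} : Set (Fin K → ℝ)) := by
        rw [← (hsupp ℓ).2]; exact ⟨hcols j, hzero⟩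
      have heq : (∑ i, p i • g i j) = y ℓ := hmemface
      exact heq ▸ hcolmem p j
    refine Set.Subset.antisymm hsub (fun x hx => ?_)
    rw [hvert] at hx
    obtain ⟨w, hw, hxw⟩ := hx
    have hhull : convexHull ℝ (Set.range y) ⊆ VI g p :=
      convexHull_min (by rintro _ ⟨ℓ, rfl⟩; exact hyinp ℓ) (convex_VI g p)
    exact down_mem (hhull hw) hxw
end
end

section
/- Let (p,q) ∈ P × Q. Then V_I(p) ∩ V_II(q) ⊆ Max v_I(p) ∩ Min v_II(q) if and only if for every ε > 0 and every k ∈ {1,…,K} one has V_I(p) ∩ (V_II(q) + ε e^k) = ∅, where e^k denotes the k-th standard unit vector of ℝ^K. -/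
open Set

noncomputable section

lemma key_aux {K m n : ℕ} (g : Fin m → Fin n → (Fin K → ℝ)) (p : Fin m → ℝ) (q : Fin n → ℝ)
    (hemp : ∀ ε : ℝ, 0 < ε → ∀ k : Fin K,
        VI g p ∩ ((fun y => y + ε • (Pi.single k 1 : Fin K → ℝ)) '' VII g q) = ∅)
    {a b : Fin K → ℝ} (ha : a ∈ VII g q) (hb : b ∈ VI g p) (hab : a ≤ b) : a = b := by
  by_contra hne
  obtain ⟨k, hk⟩ : ∃ k, a k < b k := by
    by_contra h
    push_neg at h
    exact hne (funext fun k => le_antisymm (hab k) (h k))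
  have hε : 0 < b k - a k := by linarith
  have hE := hemp _ hε k
  rw [Set.eq_empty_iff_forall_notMem] at hE
  apply hE b
  refine ⟨hb, b - (b k - a k) • (Pi.single k 1 : Fin K → ℝ), ?_, ?_⟩
  · obtain ⟨w, hw, hwa⟩ := ha
    refine ⟨w, hw, fun i => ?_⟩
    have h1 : (b - (b k - a k) • (Pi.single k 1 : Fin K → ℝ)) i
        = b i - (b k - a k) * (if i = k then 1 else 0) := by
      simp [Pi.single_apply]
    rw [h1]
    by_cases hik : i = k
    · subst hik; simpa using hwa i
    · simp [hik]; exact le_trans (hwa i) (hab i)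
  · funext i
    by_cases hik : i = k <;> simp [hik, Pi.single_apply] <;> ring

theorem stmt14 {K m n : ℕ} (hK : 0 < K) (hm : 0 < m) (hn : 0 < n)
    (g : Fin m → Fin n → (Fin K → ℝ)) (p : Fin m → ℝ) (q : Fin n → ℝ)
    (hp : p ∈ simplex m) (hq : q ∈ simplex n) :
    VI g p ∩ VII g q ⊆ maxSet (vI g p) ∩ minSet (vII g q) ↔
      ∀ ε : ℝ, 0 < ε → ∀ k : Fin K,
        VI g p ∩ ((fun y => y + ε • (Pi.single k 1 : Fin K → ℝ)) '' VII g q) = ∅ := by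
  constructor
  · intro hsub ε hε k
    rw [Set.eq_empty_iff_forall_notMem]
    rintro x ⟨hxI, y, hyII, rfl⟩
    set x := y + ε • (Pi.single k 1 : Fin K → ℝ)
    have hylex : y ≤ x := by
      intro i
      have : x i = y i + ε * (if i = k then 1 else 0) := by simp [x, Pi.single_apply]
      rw [this]
      by_cases hik : i = k <;> simp [hik] <;> positivity
    -- x ∈ VII (upward closed), y ∈ VI (downward closed)
    have hxII : x ∈ VII g q := by
      obtain ⟨w, hw, hwy⟩ := hyII
      exact ⟨w, hw, le_trans hwy hylex⟩
    have hyI : y ∈ VI g p := by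
      obtain ⟨z, hz, hxz⟩ := id hxI
      exact ⟨z, hz, le_trans hylex hxz⟩
    have hxmin := (hsub ⟨hxI, hxII⟩).2
    obtain ⟨w, hw, hwy⟩ := hyII
    have hwz : w = x := hxmin.2 w hw (le_trans hwy hylex)
    have : w k ≤ y k := hwy k
    have hx : x k = y k + ε := by simp [x, Pi.single_apply]
    rw [hwz] at this
    linarith
  · intro hemp x hx
    obtain ⟨hxI, hxII⟩ := hx
    obtain ⟨z, hz, hxz⟩ := id hxI
    have hxvI : x = z := key_aux g p q hemp hxII ⟨z, hz, le_rfl⟩ hxz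
    obtain ⟨w, hw, hwx⟩ := id hxII
    have hxvII : w = x := key_aux g p q hemp ⟨w, hw, le_rfl⟩ hxI hwx
    refine ⟨⟨hxvI ▸ hz, fun y hy hxy => ?_⟩, ⟨hxvII ▸ hw, fun y hy hyx => ?_⟩⟩
    · exact (key_aux g p q hemp hxII ⟨y, hy, le_rfl⟩ hxy).symm
    · exact key_aux g p q hemp ⟨y, hy, le_rfl⟩ hxI hyx
end
end

section
/- (Scalar case.) Suppose K = 1, so that each payoff g_{ij} is a real number and v(p,q) ∈ ℝ. If p̄ ∈ P is a minimal strategy, then p̄ is a minimax strategy, i.e. max_{q∈Q} v(p̄,q) = min_{p∈P} max_{q∈Q} v(p,q); equivalently, V_I(p̄) = min_{p∈P} max_{q∈Q} v(p,q) − ℝ_+. -/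
open Set

noncomputable section

/-- Expected scalar payoff `v(p,q) = Σ_i Σ_j p_i g_{ij} q_j` (case `K = 1`). -/
def payoffR {m n : ℕ} (g : Fin m → Fin n → ℝ) (p : Fin m → ℝ) (q : Fin n → ℝ) : ℝ :=
  ∑ i, ∑ j, p i * g i j * q j

/-- `v_I(p) = {v(p,q) : q ∈ Q}` (scalar case). -/
def vIR {m n : ℕ} (g : Fin m → Fin n → ℝ) (p : Fin m → ℝ) : Set ℝ :=
  {t | ∃ q ∈ simplex n, t = payoffR g p q}

/-- `V_I(p) = v_I(p) - ℝ_+` (scalar case). -/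
def VIR {m n : ℕ} (g : Fin m → Fin n → ℝ) (p : Fin m → ℝ) : Set ℝ :=
  {y | ∃ z ∈ vIR g p, y ≤ z}

/-- `p̄` is a minimal strategy (scalar case). -/
def MinimalStratR {m n : ℕ} (g : Fin m → Fin n → ℝ) (pbar : Fin m → ℝ) : Prop :=
  ∀ p ∈ simplex m, VIR g p ⊆ VIR g pbar → VIR g p = VIR g pbar

/-! Against a fixed `p` the payoff is linear in `q`, so its maximum over `Q` is
attained at a pure strategy and `V_I(p)` is the half-line `(-∞, max_q v(p,q)]`. Half-lines are
totally ordered by inclusion, so a strategy minimal for inclusion minimises `max_q v(p,q)`. -/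

lemma payoffR_eq_sum_mul {m n : ℕ} (g : Fin m → Fin n → ℝ) (p : Fin m → ℝ) (q : Fin n → ℝ) :
    payoffR g p q = ∑ j, (∑ i, p i * g i j) * q j := by
  rw [payoffR, Finset.sum_comm]
  simp only [Finset.sum_mul]

lemma pi_single_mem_simplex {n : ℕ} (j : Fin n) : Pi.single j 1 ∈ simplex n :=
  ⟨fun i => by by_cases h : i = j <;> simp [h], by simp⟩

lemma sum_mul_le_of_mem_simplex {n : ℕ} {c : Fin n → ℝ} {M : ℝ} (hc : ∀ j, c j ≤ M)
    {q : Fin n → ℝ} (hq : q ∈ simplex n) : ∑ j, c j * q j ≤ M :=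
  calc ∑ j, c j * q j ≤ ∑ j, M * q j :=
        Finset.sum_le_sum fun j _ => mul_le_mul_of_nonneg_right (hc j) (hq.1 j)
    _ = M := by rw [← Finset.mul_sum, hq.2, mul_one]

lemma exists_isGreatest_vIR {m n : ℕ} (hn : 0 < n) (g : Fin m → Fin n → ℝ) (p : Fin m → ℝ) :
    ∃ t, IsGreatest (vIR g p) t := by
  obtain ⟨j₀, -, hj₀⟩ := Finset.exists_max_image Finset.univ (fun j => ∑ i, p i * g i j)
    ⟨⟨0, hn⟩, Finset.mem_univ _⟩
  refine ⟨∑ i, p i * g i j₀, ⟨Pi.single j₀ 1, pi_single_mem_simplex j₀, ?_⟩, ?_⟩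
  · simp [payoffR_eq_sum_mul, Pi.single_apply]
  · rintro t ⟨q, hq, rfl⟩
    rw [payoffR_eq_sum_mul]
    exact sum_mul_le_of_mem_simplex (fun j => hj₀ j (Finset.mem_univ j)) hq

lemma VIR_eq_Iic_sSup {m n : ℕ} (hn : 0 < n) (g : Fin m → Fin n → ℝ) (p : Fin m → ℝ) :
    VIR g p = Iic (sSup (vIR g p)) := by
  obtain ⟨t, ht⟩ := exists_isGreatest_vIR hn g p
  rw [ht.csSup_eq]
  ext y
  exact ⟨fun ⟨z, hz, hyz⟩ => hyz.trans (ht.2 hz), fun hy => ⟨t, ht.1, hy⟩⟩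

lemma isLeast_image_of_forall_le_imp_eq {α β : Type*} [LinearOrder β] {f : α → β} {s : Set α}
    {a : α} (ha : a ∈ s) (hmin : ∀ b ∈ s, f b ≤ f a → f b = f a) : IsLeast (f '' s) (f a) := by
  refine ⟨mem_image_of_mem f ha, ?_⟩
  rintro _ ⟨b, hb, rfl⟩
  by_contra! hlt
  exact hlt.ne (hmin b hb hlt.le)

theorem stmt15_general {m n : ℕ} (hn : 0 < n)
    (g : Fin m → Fin n → ℝ) (pbar : Fin m → ℝ) (hpbar : pbar ∈ simplex m)
    (hmin : MinimalStratR g pbar) :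
    sSup (vIR g pbar) = sInf {s : ℝ | ∃ p ∈ simplex m, s = sSup (vIR g p)} ∧
    VIR g pbar = Set.Iic (sInf {s : ℝ | ∃ p ∈ simplex m, s = sSup (vIR g p)}) := by
  have hVIR := VIR_eq_Iic_sSup hn g
  have hleast : IsLeast ((fun p => sSup (vIR g p)) '' simplex m) (sSup (vIR g pbar)) :=
    isLeast_image_of_forall_le_imp_eq hpbar fun p hp hle =>
      Iic_injective (by simpa only [hVIR] using hmin p hp (by rwa [hVIR, hVIR, Iic_subset_Iic]))
  have hvalues : {s : ℝ | ∃ p ∈ simplex m, s = sSup (vIR g p)} =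
      (fun p => sSup (vIR g p)) '' simplex m := by
    ext s
    simp [eq_comm]
  rw [hvalues, hleast.csInf_eq]
  exact ⟨rfl, hVIR pbar⟩

theorem stmt15 {m n : ℕ} (hm : 0 < m) (hn : 0 < n)
    (g : Fin m → Fin n → ℝ) (pbar : Fin m → ℝ) (hpbar : pbar ∈ simplex m)
    (hmin : MinimalStratR g pbar) :
    sSup (vIR g pbar) = sInf {s : ℝ | ∃ p ∈ simplex m, s = sSup (vIR g p)} ∧
    VIR g pbar = Set.Iic (sInf {s : ℝ | ∃ p ∈ simplex m, s = sSup (vIR g p)}) :=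
  stmt15_general hn g pbar hpbar hmin
end
end

section
/- (Domination property for level-closed functions.) Let X be a nonempty compact topological space, (Z, ≤) a partially ordered set, and f : X → Z a function such that for every z ∈ Z the level set {x ∈ X : f(x) ≤ z} is closed. Then for every x̄ ∈ X there exists x* ∈ X such that f(x*) ≤ f(x̄) and f(x*) is a minimal element of the image f[X] = {f(x) : x ∈ X}, i.e. whenever x ∈ X and f(x) ≤ f(x*), then f(x) = f(x*). -/
open Set

theorem stmt18 {X Z : Type*} [TopologicalSpace X] [CompactSpace X] [Nonempty X]
    [PartialOrder Z] (f : X → Z)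
    (hf : ∀ z : Z, IsClosed {x : X | f x ≤ z}) (xbar : X) :
    ∃ xstar : X, f xstar ≤ f xbar ∧ ∀ x : X, f x ≤ f xstar → f x = f xstar := by
  set T : Set Zᵒᵈ := {z : Zᵒᵈ | (∃ x : X, f x = OrderDual.ofDual z) ∧ OrderDual.ofDual z ≤ f xbar}
  have hT : (OrderDual.toDual (f xbar)) ∈ T := ⟨⟨xbar, rfl⟩, le_refl _⟩
  have hchain : ∀ c ⊆ T, IsChain (· ≤ ·) c → ∀ y ∈ c, ∃ ub ∈ T, ∀ z ∈ c, z ≤ ub := by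
    intro c hcT hc y hy
    have hne : Nonempty c := ⟨⟨y, hy⟩⟩
    have hint : (⋂ z : c, {x : X | f x ≤ OrderDual.ofDual (z : Zᵒᵈ)}).Nonempty := by
      apply IsCompact.nonempty_iInter_of_directed_nonempty_isCompact_isClosed
      · rintro ⟨p, hp⟩ ⟨q, hq⟩
        rcases eq_or_ne p q with rfl | hpq
        · exact ⟨⟨p, hp⟩, subset_rfl, subset_rfl⟩
        · rcases hc hp hq hpq with h | h
          · exact ⟨⟨q, hq⟩, fun x hx => le_trans hx h, subset_rfl⟩
          · exact ⟨⟨p, hp⟩, subset_rfl, fun x hx => le_trans hx h⟩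
      · rintro ⟨p, hp⟩
        obtain ⟨x, hx⟩ := (hcT hp).1
        exact ⟨x, by simp [hx]⟩
      · exact fun i => (hf _).isCompact
      · exact fun i => hf _
    obtain ⟨x0, hx0⟩ := hint
    simp only [mem_iInter, mem_setOf_eq] at hx0
    exact ⟨OrderDual.toDual (f x0), ⟨⟨x0, rfl⟩, le_trans (hx0 ⟨y, hy⟩) (hcT hy).2⟩,
      fun z hz => hx0 ⟨z, hz⟩⟩
  obtain ⟨m, -, hm⟩ := zorn_le_nonempty₀ T hchain (OrderDual.toDual (f xbar)) hT
  obtain ⟨⟨xm, hxm⟩, hmle⟩ := hm.1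
  refine ⟨xm, ?_, fun x hx => ?_⟩
  · rw [hxm]; exact hmle
  · have hxT : OrderDual.toDual (f x) ∈ T := ⟨⟨x, rfl⟩, by
      calc f x ≤ f xm := hx
      _ ≤ f xbar := by rw [hxm]; exact hmle⟩
    have h1 : m ≤ OrderDual.toDual (f x) := by
      show f x ≤ OrderDual.ofDual m
      rw [← hxm]; exact hx
    have h2 : OrderDual.toDual (f x) = m := le_antisymm (hm.2 hxT h1) h1
    have h3 : f x = OrderDual.ofDual m := congrArg OrderDual.ofDual h2
    rw [h3, hxm]
end

section
/- (Scalarization of Shapley equilibria.) A pair (p̄,q̄) ∈ P × Q is a Shapley equilibrium, i.e. v(p̄,q̄) ∈ Max v_I(p̄) ∩ Min v_II(q̄), if and only if there exist α, β ∈ int ℝ^K_+ (vectors with all components strictly positive) such that αᵀ v(p̄,q̄) = max_{q∈Q} αᵀ v(p̄,q) and βᵀ v(p̄,q̄) = min_{p∈P} βᵀ v(p,q̄). -/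
open Set

noncomputable section

open Matrix

/-!
Strictly positive weights turn Pareto optimality into scalar optimality: if `α > 0` and `x`
maximizes `α ⬝ᵥ ·` over `A`, a point `y ∈ A` with `x ≤ y` has `α ⬝ᵥ (y - x) ≤ 0`, forcing `y = x`.

Conversely, `v_I(p̄)` is the image of the simplex under the linear map `q ↦ v(p̄, q)`. If `v̄` is
Pareto-maximal there, the cone generated by the vectors `v(p̄, e_j) - v̄` meets the nonnegative
orthant only at `0`. Being finitely generated this cone is closed, so Farkas separation from the
standard simplex gives a functional that is strictly positive on every `e_k` and nonpositive on the
cone: these are the weights `α`. The weights `β` come from the same argument applied to `-v`.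
Closedness of a finitely generated cone is proved by induction on the support of the coefficients:
when the generators in use are dependent, moving along a kernel direction kills one coefficient.
-/

theorem exists_nonneg_sub_smul_eq_zero {ι : Type*} [Fintype ι] {c z : ι → ℝ} (hc : 0 ≤ c)
    (hz : ∃ i, 0 < z i) :
    ∃ (t : ℝ) (i : ι), 0 < z i ∧ 0 ≤ c - t • z ∧ (c - t • z) i = 0 := by
  obtain ⟨i, hi, hmin⟩ := Finset.exists_min_image (Finset.univ.filter fun j => 0 < z j)
    (fun j => c j / z j) (by simpa [Finset.filter_nonempty_iff] using hz)
  have hzi : 0 < z i := (Finset.mem_filter.1 hi).2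
  refine ⟨c i / z i, i, hzi, fun j => ?_, by simp [hzi.ne']⟩
  simp only [Pi.zero_apply, Pi.sub_apply, Pi.smul_apply, smul_eq_mul, sub_nonneg]
  rcases lt_or_ge 0 (z j) with hzj | hzj
  · exact (le_div_iff₀ hzj).1 (hmin j (by simpa using hzj))
  · exact (mul_nonpos_of_nonneg_of_nonpos (div_nonneg (hc i) hzi.le) hzj).trans (hc j)

theorem LinearMap.exists_pos_mem_ker_of_not_injOn {ι M : Type*} [AddCommGroup M] [Module ℝ M]
    (f : (ι → ℝ) →ₗ[ℝ] M) {V : Submodule ℝ (ι → ℝ)} (hf : ¬InjOn f V) :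
    ∃ z ∈ V, f z = 0 ∧ ∃ i, 0 < z i := by
  obtain ⟨a, ha, b, hb, hab, hne⟩ : ∃ a ∈ V, ∃ b ∈ V, f a = f b ∧ a ≠ b := by
    simpa [InjOn] using hf
  obtain ⟨i, hi⟩ := Function.ne_iff.1 (sub_ne_zero.2 hne)
  rcases hi.lt_or_gt with hneg | hpos
  · exact ⟨b - a, V.sub_mem hb ha, by simp [hab], i, by simpa using hneg⟩
  · exact ⟨a - b, V.sub_mem ha hb, by simp [hab], i, hpos⟩

section ClosedCone

variable {ι E : Type*} [Fintype ι] [AddCommGroup E] [Module ℝ E] [TopologicalSpace E]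
  [IsTopologicalAddGroup E] [ContinuousSMul ℝ E] [T2Space E]

theorem LinearMap.isClosed_image_of_injOn {D : Type*} [AddCommGroup D] [Module ℝ D]
    [TopologicalSpace D] [IsTopologicalAddGroup D] [ContinuousSMul ℝ D] [T2Space D]
    [FiniteDimensional ℝ D] (f : D →ₗ[ℝ] E) (V : Submodule ℝ D) (hf : InjOn f V) {S : Set D}
    (hS : IsClosed S) (hSV : S ⊆ V) : IsClosed (f '' S) := by
  have hker : LinearMap.ker (f.domRestrict V) = ⊥ :=
    LinearMap.ker_eq_bot.2 fun a b h => Subtype.ext (hf a.2 b.2 h)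
  have hS' : f '' S = f.domRestrict V '' (Subtype.val ⁻¹' S) := by
    change f '' S = (f ∘ Subtype.val) '' _
    rw [image_comp, image_preimage_eq_of_subset (by simpa using hSV)]
  rw [hS']
  exact (LinearMap.isClosedEmbedding_of_injective hker).isClosedMap _
    (hS.preimage continuous_subtype_val)

theorem LinearMap.isClosed_image_nonneg_of_support_subset (f : (ι → ℝ) →ₗ[ℝ] E)
    (s : Finset ι) : IsClosed (f '' {c | 0 ≤ c ∧ ∀ i ∉ s, c i = 0}) := by
  classical
  induction s using Finset.strongInduction with
  | H s ih =>
  let V : Submodule ℝ (ι → ℝ) := Submodule.pi (↑s)ᶜ fun _ => ⊥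
  have hV : ∀ c, c ∈ V ↔ ∀ i ∉ s, c i = 0 := by simp [V, Submodule.mem_pi]
  by_cases hinj : InjOn f V
  · refine f.isClosed_image_of_injOn V hinj ?_ fun c hc => (hV c).2 hc.2
    simp only [ofPred_and, ofPred_forall]
    exact isClosed_Ici.inter (isClosed_biInter fun i _ => isClosed_eq (continuous_apply i)
      continuous_const)
  obtain ⟨z, hzV, hfz, hz⟩ := f.exists_pos_mem_ker_of_not_injOn hinj
  have hzs := (hV z).1 hzV
  suffices f '' {c | 0 ≤ c ∧ ∀ i ∉ s, c i = 0} =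
      ⋃ i ∈ s, f '' {c | 0 ≤ c ∧ ∀ j ∉ s.erase i, c j = 0} by
    rw [this]
    exact isClosed_biUnion_finset fun i hi => ih _ (Finset.erase_ssubset hi)
  refine Subset.antisymm ?_ (iUnion₂_subset fun i _ => image_mono fun c hc =>
    ⟨hc.1, fun j hj => hc.2 j fun h => hj (Finset.mem_of_mem_erase h)⟩)
  rintro _ ⟨c, ⟨hc, hcs⟩, rfl⟩
  -- moving `c` along the kernel direction `z` until a coordinate vanishes keeps `f c` fixed
  obtain ⟨t, i, hzi, hc', hc'i⟩ := exists_nonneg_sub_smul_eq_zero hc hz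
  have his : i ∈ s := by_contra fun h => hzi.ne' (hzs i h)
  refine mem_biUnion his ⟨c - t • z, ⟨hc', fun j hj => ?_⟩, by simp [hfz]⟩
  rcases eq_or_ne j i with rfl | hji
  · exact hc'i
  · have hjs : j ∉ s := fun h => hj (Finset.mem_erase.2 ⟨hji, h⟩)
    simp [hcs j hjs, hzs j hjs]

theorem LinearMap.isClosed_image_nonneg (f : (ι → ℝ) →ₗ[ℝ] E) : IsClosed (f '' {c | 0 ≤ c}) := by
  simpa using f.isClosed_image_nonneg_of_support_subset Finset.univ

end ClosedCone

theorem exists_pos_dotProduct_nonpos {ι κ : Type*} [Fintype ι] [Fintype κ]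
    (L : (ι → ℝ) →ₗ[ℝ] (κ → ℝ)) (h : ∀ c, 0 ≤ c → 0 ≤ L c → L c = 0) :
    ∃ α : κ → ℝ, (∀ k, 0 < α k) ∧ ∀ c, 0 ≤ c → α ⬝ᵥ L c ≤ 0 := by
  classical
  let C : ProperCone ℝ (κ → ℝ) :=
    ⟨(PointedCone.positive ℝ (ι → ℝ)).map L, L.isClosed_image_nonneg⟩
  have hC : ∀ y, y ∈ C ↔ ∃ c, 0 ≤ c ∧ L c = y := fun y => PointedCone.mem_map.trans (by simp)
  have hdisj : Disjoint (stdSimplex ℝ κ) C := by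
    refine disjoint_right.2 fun y hy hyΔ => ?_
    obtain ⟨c, hc, rfl⟩ := (hC y).1 hy
    have := hyΔ.2
    rw [h c hc hyΔ.1] at this
    simp at this
  obtain ⟨φ, hφC, hφΔ⟩ := C.hyperplane_separation (convex_stdSimplex ℝ κ)
    (isCompact_stdSimplex ℝ κ) hdisj
  refine ⟨fun k => -φ (fun j => if k = j then 1 else 0),
    fun k => neg_pos.2 (hφΔ _ (ite_eq_mem_stdSimplex ℝ k)), fun c hc => ?_⟩
  have hφ : ∀ y, φ y = ∑ k, y k * φ (fun j => if k = j then 1 else 0) :=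
    LinearMap.pi_apply_eq_sum_univ φ.toLinearMap
  have := hφC (L c) ((hC _).2 ⟨c, hc, rfl⟩)
  rw [hφ] at this
  simpa [dotProduct, mul_comm] using this

theorem exists_pos_dotProduct_le_of_mem_maxSet {ι : Type*} [Fintype ι] {K : ℕ}
    (L : (ι → ℝ) →ₗ[ℝ] (Fin K → ℝ)) {x : Fin K → ℝ} (hx : x ∈ maxSet (L '' stdSimplex ℝ ι)) :
    ∃ α : Fin K → ℝ, (∀ k, 0 < α k) ∧ ∀ l ∈ stdSimplex ℝ ι, α ⬝ᵥ L l ≤ α ⬝ᵥ x := by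
  -- `L' c = ∑ i, c i • (L eᵢ - x)`: the cone of directions from `x` to the vertices
  let L' := L - (∑ i, LinearMap.proj (R := ℝ) (φ := fun _ : ι => ℝ) i).smulRight x
  have hL' : ∀ c, L' c = L c - (∑ i, c i) • x := fun c => by simp [L']
  have hL'Δ : ∀ l ∈ stdSimplex ℝ ι, L' l = L l - x := fun l hl => by rw [hL', hl.2, one_smul]
  obtain ⟨α, hα, hαL'⟩ := exists_pos_dotProduct_nonpos L' fun c hc hL'c => by
    rcases (Finset.sum_nonneg fun i _ => hc i).eq_or_lt with hs | hs
    · have hc0 : c = 0 := funext fun i =>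
        (Finset.sum_eq_zero_iff_of_nonneg fun i _ => hc i).1 hs.symm i (Finset.mem_univ i)
      simp [hc0]
    · set s := ∑ i, c i
      have hl : s⁻¹ • c ∈ stdSimplex ℝ ι :=
        ⟨fun i => mul_nonneg (inv_nonneg.2 hs.le) (hc i), by
          simp [← Finset.mul_sum, inv_mul_cancel₀ hs.ne', s]⟩
      have hL'l : L' (s⁻¹ • c) = s⁻¹ • L' c := map_smul L' _ _
      have hxl : x ≤ L (s⁻¹ • c) := by
        rw [← sub_nonneg, ← hL'Δ _ hl, hL'l]
        exact smul_nonneg (inv_nonneg.2 hs.le) hL'c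
      have := hx.2 _ (mem_image_of_mem L hl) hxl
      rw [hL'Δ _ hl, this, sub_self, eq_comm, smul_eq_zero] at hL'l
      exact hL'l.resolve_left (inv_ne_zero hs.ne')
  refine ⟨α, hα, fun l hl => ?_⟩
  have := hαL' l hl.1
  rwa [hL'Δ l hl, dotProduct_sub, sub_nonpos] at this

theorem exists_pos_dotProduct_ge_of_mem_minSet {ι : Type*} [Fintype ι] {K : ℕ}
    (L : (ι → ℝ) →ₗ[ℝ] (Fin K → ℝ)) {x : Fin K → ℝ} (hx : x ∈ minSet (L '' stdSimplex ℝ ι)) :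
    ∃ β : Fin K → ℝ, (∀ k, 0 < β k) ∧ ∀ l ∈ stdSimplex ℝ ι, β ⬝ᵥ x ≤ β ⬝ᵥ L l := by
  have hneg : -x ∈ maxSet ((-L) '' stdSimplex ℝ ι) := by
    obtain ⟨⟨l, hl, rfl⟩, hmin⟩ := hx
    refine ⟨⟨l, hl, by simp⟩, ?_⟩
    rintro _ ⟨l', hl', rfl⟩ hle
    simp [hmin (L l') (mem_image_of_mem L hl') (by simpa using hle)]
  obtain ⟨β, hβ, hβle⟩ := exists_pos_dotProduct_le_of_mem_maxSet (-L) hneg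
  exact ⟨β, hβ, fun l hl => by simpa using hβle l hl⟩

theorem dotProduct_lt_dotProduct_of_pos {κ : Type*} [Fintype κ] {α x y : κ → ℝ}
    (hα : ∀ k, 0 < α k) (hxy : x < y) : α ⬝ᵥ x < α ⬝ᵥ y := by
  obtain ⟨hle, k, hk⟩ := Pi.lt_def.1 hxy
  exact Finset.sum_lt_sum (fun i _ => mul_le_mul_of_nonneg_left (hle i) (hα i).le)
    ⟨k, Finset.mem_univ k, mul_lt_mul_of_pos_left hk (hα k)⟩

theorem mem_maxSet_of_dotProduct_le {K : ℕ} {A : Set (Fin K → ℝ)} {α x : Fin K → ℝ}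
    (hα : ∀ k, 0 < α k) (hx : x ∈ A) (h : ∀ y ∈ A, α ⬝ᵥ y ≤ α ⬝ᵥ x) : x ∈ maxSet A :=
  ⟨hx, fun y hy hxy => by_contra fun hne =>
    (h y hy).not_gt (dotProduct_lt_dotProduct_of_pos hα (lt_of_le_of_ne hxy (Ne.symm hne)))⟩

theorem mem_minSet_of_le_dotProduct {K : ℕ} {A : Set (Fin K → ℝ)} {β x : Fin K → ℝ}
    (hβ : ∀ k, 0 < β k) (hx : x ∈ A) (h : ∀ y ∈ A, β ⬝ᵥ x ≤ β ⬝ᵥ y) : x ∈ minSet A :=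
  ⟨hx, fun y hy hyx => by_contra fun hne =>
    (h y hy).not_gt (dotProduct_lt_dotProduct_of_pos hβ (lt_of_le_of_ne hyx hne))⟩

def payoffBilin {K m n : ℕ} (g : Fin m → Fin n → (Fin K → ℝ)) :
    (Fin m → ℝ) →ₗ[ℝ] (Fin n → ℝ) →ₗ[ℝ] (Fin K → ℝ) :=
  LinearMap.mk₂ ℝ (payoff g)
    (fun p p' q => by simp [payoff, add_mul, add_smul, Finset.sum_add_distrib])
    (fun a p q => by simp [payoff, mul_assoc, mul_smul, Finset.smul_sum])
    (fun p q q' => by simp [payoff, mul_add, add_smul, Finset.sum_add_distrib])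
    (fun a p q => by simp [payoff, mul_left_comm _ a, mul_smul, Finset.smul_sum])

theorem vI_eq_image {K m n : ℕ} (g : Fin m → Fin n → (Fin K → ℝ)) (p : Fin m → ℝ) :
    vI g p = payoffBilin g p '' stdSimplex ℝ (Fin n) := by
  ext y
  exact exists_congr fun q => and_congr_right fun _ => eq_comm

theorem vII_eq_image {K m n : ℕ} (g : Fin m → Fin n → (Fin K → ℝ)) (q : Fin n → ℝ) :
    vII g q = (payoffBilin g).flip q '' stdSimplex ℝ (Fin m) := by
  ext y
  exact exists_congr fun p => and_congr_right fun _ => eq_comm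

theorem stmt19_general {K m n : ℕ}
    (g : Fin m → Fin n → (Fin K → ℝ)) (pbar : Fin m → ℝ) (qbar : Fin n → ℝ)
    (hpbar : pbar ∈ simplex m) (hqbar : qbar ∈ simplex n) :
    payoff g pbar qbar ∈ maxSet (vI g pbar) ∩ minSet (vII g qbar) ↔
      ∃ α β : Fin K → ℝ, (∀ k, 0 < α k) ∧ (∀ k, 0 < β k) ∧
        (∀ q ∈ simplex n,
          ∑ k, α k * payoff g pbar q k ≤ ∑ k, α k * payoff g pbar qbar k) ∧
        (∀ p ∈ simplex m,
          ∑ k, β k * payoff g pbar qbar k ≤ ∑ k, β k * payoff g p qbar k) := by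
  rw [vI_eq_image, vII_eq_image]
  constructor
  · rintro ⟨hmax, hmin⟩
    obtain ⟨α, hα, hαle⟩ := exists_pos_dotProduct_le_of_mem_maxSet _ hmax
    obtain ⟨β, hβ, hβle⟩ := exists_pos_dotProduct_ge_of_mem_minSet _ hmin
    exact ⟨α, β, hα, hβ, hαle, hβle⟩
  · rintro ⟨α, β, hα, hβ, hαle, hβle⟩
    exact ⟨mem_maxSet_of_dotProduct_le hα (mem_image_of_mem _ hqbar) (forall_mem_image.2 hαle),
      mem_minSet_of_le_dotProduct hβ (mem_image_of_mem _ hpbar) (forall_mem_image.2 hβle)⟩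

theorem stmt19 {K m n : ℕ} (hK : 0 < K) (hm : 0 < m) (hn : 0 < n)
    (g : Fin m → Fin n → (Fin K → ℝ)) (pbar : Fin m → ℝ) (qbar : Fin n → ℝ)
    (hpbar : pbar ∈ simplex m) (hqbar : qbar ∈ simplex n) :
    payoff g pbar qbar ∈ maxSet (vI g pbar) ∩ minSet (vII g qbar) ↔
      ∃ α β : Fin K → ℝ, (∀ k, 0 < α k) ∧ (∀ k, 0 < β k) ∧
        (∀ q ∈ simplex n,
          ∑ k, α k * payoff g pbar q k ≤ ∑ k, α k * payoff g pbar qbar k) ∧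
        (∀ p ∈ simplex m,
          ∑ k, β k * payoff g pbar qbar k ≤ ∑ k, β k * payoff g p qbar k) :=
  stmt19_general g pbar qbar hpbar hqbar
end
end
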